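/- arXiv:2503.10430 — 4 statements merged into one kernel-verified Lean document; each statement's English description precedes it below -/
import Mathlib

section
/- Let U be a nonempty open set witnessing the open set condition for F, i.e. the images f_1(U),…,f_m(U) are pairwise disjoint subsets of U. Then the dynamical boundary B(A) is disjoint from U, i.e. B(A) ∩ U = ∅. -/
/-!
Each `f_j` is continuous and, being a similarity of `ℝ^d` with positive ratio, an open map.
As `closure U` is closed and invariant under the contractions `f_j`, it contains `A`.
If a point `x ∈ U` lay in a boundary set `A ∩ f_w⁻¹(f_v(A))` with `v = a…`, `w = b…`,
`a ≠ b`, then `f_w x` would lie both in the open set `f_b(U)` and in `closure (f_a(U))`,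
which are disjoint. So the union of the boundary sets misses the open set `U`, and so does
its closure.
-/

open Set

noncomputable section

/-- Points of Euclidean space `ℝ^d`. -/
abbrev Pt (d : ℕ) := EuclideanSpace ℝ (Fin d)

/-- For a word `w = w₁…w_k`, the map `f_w = f_{w₁} ∘ ⋯ ∘ f_{w_k}`. -/
def fWord {d m : ℕ} (f : Fin m → Pt d → Pt d) (w : List (Fin m)) : Pt d → Pt d :=
  w.foldr (fun j g => f j ∘ g) id

/-- The union of all boundary sets `A ∩ f_w⁻¹(f_v(A))`, over words `v, w` of equal
length `k ≥ 1` whose first letters differ. -/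
def boundaryUnion {d m : ℕ} (f : Fin m → Pt d → Pt d) (A : Set (Pt d)) : Set (Pt d) :=
  {x | ∃ v w : List (Fin m), v ≠ [] ∧ v.length = w.length ∧ v.head? ≠ w.head? ∧
        x ∈ A ∩ fWord f w ⁻¹' (fWord f v '' A)}

/-- The dynamical boundary `B(A)`: the closure of the union of all boundary sets. -/
def dynBoundary {d m : ℕ} (f : Fin m → Pt d → Pt d) (A : Set (Pt d)) : Set (Pt d) :=
  closure (boundaryUnion f A)

open Metric

/- Rescaled, `f` is an isometry, hence affine (the target is strictly convex), hence onto
(the dimension is finite): `f` is a homeomorphism up to a homothety. -/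
theorem isOpenMap_of_dist_eq_mul {E : Type*} [NormedAddCommGroup E] [NormedSpace ℝ E]
    [StrictConvexSpace ℝ E] [FiniteDimensional ℝ E] {f : E → E} {r : ℝ} (hr : 0 < r)
    (hf : ∀ x y, dist (f x) (f y) = r * dist x y) : IsOpenMap f := by
  have hg : Isometry fun x => r⁻¹ • f x := Isometry.of_dist_eq fun x y => by
    rw [dist_smul₀, hf, Real.norm_of_nonneg (inv_nonneg.2 hr.le), inv_mul_cancel_left₀ hr.ne']
  have : Inhabited E := ⟨0⟩
  let g : E ≃ₜ E :=
    (hg.affineIsometryOfStrictConvexSpace.toAffineIsometryEquiv rfl).toHomeomorph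
  let h : E ≃ₜ E := Homeomorph.smulOfNeZero r hr.ne'
  have hf_eq : f = h ∘ g := by
    funext x
    simp [g, h, smul_inv_smul₀ hr.ne']
  rw [hf_eq]
  exact h.isOpenMap.comp g.isOpenMap

theorem LipschitzWith.infDist_apply_le {X : Type*} [PseudoMetricSpace X] {f : X → X}
    {K : NNReal} (hf : LipschitzWith K f) {C : Set X} (hC : MapsTo f C C) (hCne : C.Nonempty)
    (x : X) : infDist (f x) C ≤ K * infDist x C := by
  have : Nonempty C := hCne.to_subtype
  rw [infDist_eq_iInf (x := x), Real.mul_iInf_of_nonneg K.coe_nonneg]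
  exact le_ciInf fun y => (infDist_le_dist_of_mem (hC y.2)).trans (hf.dist_le_mul x y)

/- A point of `A` farthest from `C` is the image of a point of `A` at least as far from `C`,
so its distance to `C` is contracted into itself. -/
theorem subset_of_contracting_mapsTo {X ι : Type*} [PseudoMetricSpace X] {f : ι → X → X}
    {K : ι → NNReal} (hf : ∀ j, LipschitzWith (K j) (f j)) (hK : ∀ j, K j < 1)
    {A : Set X} (hAc : IsCompact A) (hA : A ⊆ ⋃ j, f j '' A)
    {C : Set X} (hCc : IsClosed C) (hCne : C.Nonempty) (hC : ∀ j, MapsTo (f j) C C) :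
    A ⊆ C := by
  intro a ha
  obtain ⟨a₀, ha₀, hmax⟩ :=
    hAc.exists_isMaxOn ⟨a, ha⟩ (continuous_infDist_pt C).continuousOn
  obtain ⟨j, b, hb, rfl⟩ := mem_iUnion.1 (hA ha₀)
  have hcontract : infDist (f j b) C ≤ K j * infDist (f j b) C :=
    ((hf j).infDist_apply_le (hC j) hCne b).trans
      (mul_le_mul_of_nonneg_left (hmax hb) (K j).coe_nonneg)
  have hzero : infDist (f j b) C ≤ 0 := by
    nlinarith [hK j, infDist_nonneg (x := f j b) (s := C)]
  rw [hCc.mem_iff_infDist_zero hCne]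
  exact le_antisymm ((hmax ha).trans hzero) infDist_nonneg

section IFS

variable {d m : ℕ} (f : Fin m → Pt d → Pt d)

theorem fWord_cons (j : Fin m) (w : List (Fin m)) : fWord f (j :: w) = f j ∘ fWord f w := rfl

theorem mapsTo_fWord {S : Set (Pt d)} (hS : ∀ j, MapsTo (f j) S S) :
    ∀ w, MapsTo (fWord f w) S S
  | [] => mapsTo_id S
  | j :: w => (hS j).comp (mapsTo_fWord hS w)

theorem disjoint_boundaryUnion {A U : Set (Pt d)} (hcont : ∀ j, Continuous (f j))
    (hopen : ∀ j, IsOpenMap (f j)) (hUo : IsOpen U) (hU : ∀ j, MapsTo (f j) U U)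
    (hUdisj : ∀ i j, i ≠ j → Disjoint (f i '' U) (f j '' U)) (hAU : A ⊆ closure U) :
    Disjoint (boundaryUnion f A) U := by
  rw [Set.disjoint_left]
  rintro x ⟨v, w, hv, hlen, hhead, -, y, hyA, hxy⟩ hxU
  obtain ⟨a, v, rfl⟩ := List.exists_cons_of_ne_nil hv
  obtain ⟨b, w, rfl⟩ := List.exists_cons_of_ne_nil (l := w) (by rintro rfl; simp at hlen)
  have hab : a ≠ b := fun h => hhead (by simp [h])
  have hclosure : fWord f (b :: w) x ∈ closure (f a '' U) := by
    rw [← hxy, fWord_cons]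
    refine image_closure_subset_closure_image (hcont a) (mem_image_of_mem _ ?_)
    exact mapsTo_fWord f (fun j => (hU j).closure (hcont j)) v (hAU hyA)
  have hopen_image : fWord f (b :: w) x ∈ f b '' U :=
    mem_image_of_mem _ (mapsTo_fWord f hU w hxU)
  exact Set.disjoint_left.1 ((hUdisj a b hab).closure_left (hopen b U hUo)) hclosure hopen_image

end IFS

theorem dynBoundary_inter_osc_set_eq_empty_general
    {d m : ℕ} (f : Fin m → Pt d → Pt d) (r : Fin m → ℝ)
    (hr0 : ∀ j, 0 < r j) (hr1 : ∀ j, r j < 1)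
    (hf : ∀ j x y, dist (f j x) (f j y) = r j * dist x y)
    (A : Set (Pt d)) (hAc : IsCompact A)
    (hA : A = ⋃ j, f j '' A)
    (U : Set (Pt d)) (hUne : U.Nonempty) (hUo : IsOpen U)
    (hUsub : ∀ j, f j '' U ⊆ U)
    (hUdisj : ∀ i j, i ≠ j → Disjoint (f i '' U) (f j '' U)) :
    dynBoundary f A ∩ U = ∅ := by
  have hlip : ∀ j, LipschitzWith (r j).toNNReal (f j) := fun j =>
    LipschitzWith.of_dist_le_mul fun x y => by rw [hf, Real.coe_toNNReal _ (hr0 j).le]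
  have hcont : ∀ j, Continuous (f j) := fun j => (hlip j).continuous
  have hU : ∀ j, MapsTo (f j) U U := fun j => mapsTo_iff_image_subset.2 (hUsub j)
  have hAU : A ⊆ closure U :=
    subset_of_contracting_mapsTo hlip (fun j => by simpa using hr1 j) hAc hA.subset
      isClosed_closure hUne.closure fun j => (hU j).closure (hcont j)
  have hB : Disjoint (boundaryUnion f A) U :=
    disjoint_boundaryUnion f hcont (fun j => isOpenMap_of_dist_eq_mul (hr0 j) (hf j)) hUo hU
      hUdisj hAU
  exact disjoint_iff_inter_eq_empty.1 (hB.closure_left hUo)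

/-- If `U` is a nonempty open set witnessing the open set condition for `F`, then the
dynamical boundary `B(A)` is disjoint from `U`: `B(A) ∩ U = ∅`. -/
theorem dynBoundary_inter_osc_set_eq_empty
    {d m : ℕ} (hm : 2 ≤ m) (f : Fin m → Pt d → Pt d) (r : Fin m → ℝ)
    (hr0 : ∀ j, 0 < r j) (hr1 : ∀ j, r j < 1)
    (hf : ∀ j x y, dist (f j x) (f j y) = r j * dist x y)
    (A : Set (Pt d)) (hAne : A.Nonempty) (hAc : IsCompact A)
    (hA : A = ⋃ j, f j '' A)
    (U : Set (Pt d)) (hUne : U.Nonempty) (hUo : IsOpen U)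
    (hUsub : ∀ j, f j '' U ⊆ U)
    (hUdisj : ∀ i j, i ≠ j → Disjoint (f i '' U) (f j '' U)) :
    dynBoundary f A ∩ U = ∅ :=
  dynBoundary_inter_osc_set_eq_empty_general f r hr0 hr1 hf A hAc hA U hUne hUo hUsub hUdisj
end
end

section
/- Assume F satisfies the open set condition. Then for every point x in the dynamical interior I(A) there is a word w with x ∈ A_w and A_w ⊆ I(A); consequently I(A) is a countable union of pieces. -/
/-! The dynamical boundary is closed, so a point of the dynamical interior has a neighbourhood
missing it. A piece `A_w` has diameter at most `c ^ |w| · diam A`, where `c < 1` is the largest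
contraction ratio, and every point of `A` lies in pieces of every level; a long enough such piece
lies in that neighbourhood. -/

open Set

noncomputable section

open Filter

namespace fWord

variable {d m : ℕ} {f : Fin m → Pt d → Pt d} {A : Set (Pt d)}

@[simp]
theorem nil_apply (x : Pt d) : fWord f [] x = x := rfl

@[simp]
theorem cons_apply (j : Fin m) (w : List (Fin m)) (x : Pt d) :
    fWord f (j :: w) x = f j (fWord f w x) := rfl

theorem image_subset (hfA : ∀ j, f j '' A ⊆ A) (w : List (Fin m)) : fWord f w '' A ⊆ A := by
  induction w with
  | nil => rintro _ ⟨a, ha, rfl⟩; exact ha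
  | cons j w ih =>
    rintro _ ⟨a, ha, rfl⟩
    exact hfA j ⟨_, ih ⟨a, ha, rfl⟩, rfl⟩

theorem exists_length_eq_mem_image (hA : A ⊆ ⋃ j, f j '' A) :
    ∀ (k : ℕ), ∀ x ∈ A, ∃ w : List (Fin m), w.length = k ∧ x ∈ fWord f w '' A
  | 0, x, hx => ⟨[], rfl, x, hx, rfl⟩
  | k + 1, x, hx => by
    obtain ⟨j, y, hy, rfl⟩ := mem_iUnion.1 (hA hx)
    obtain ⟨w, rfl, z, hz, rfl⟩ := exists_length_eq_mem_image hA k y hy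
    exact ⟨j :: w, rfl, z, hz, rfl⟩

theorem dist_le {c : ℝ} (hc : 0 ≤ c) (hf : ∀ j x y, dist (f j x) (f j y) ≤ c * dist x y)
    (w : List (Fin m)) (x y : Pt d) :
    dist (fWord f w x) (fWord f w y) ≤ c ^ w.length * dist x y := by
  induction w with
  | nil => simp
  | cons j w ih =>
    calc dist (fWord f (j :: w) x) (fWord f (j :: w) y)
        ≤ c * dist (fWord f w x) (fWord f w y) := hf j _ _
      _ ≤ c * (c ^ w.length * dist x y) := by gcongr
      _ = c ^ (j :: w).length * dist x y := by rw [List.length_cons, pow_succ]; ring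

theorem exists_mem_image_subset_of_isOpen {c : ℝ} (hc0 : 0 ≤ c) (hc1 : c < 1)
    (hf : ∀ j x y, dist (f j x) (f j y) ≤ c * dist x y) (hA : A ⊆ ⋃ j, f j '' A)
    (hAb : Bornology.IsBounded A) {V : Set (Pt d)} (hV : IsOpen V) {x : Pt d} (hxA : x ∈ A)
    (hxV : x ∈ V) : ∃ w : List (Fin m), w ≠ [] ∧ x ∈ fWord f w '' A ∧ fWord f w '' A ⊆ V := by
  obtain ⟨ε, hε, hball⟩ := Metric.isOpen_iff.1 hV x hxV
  have hsmall : ∀ᶠ n in atTop, c ^ n * Metric.diam A < ε := by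
    have := (tendsto_pow_atTop_nhds_zero_of_lt_one hc0 hc1).mul_const (Metric.diam A)
    rw [zero_mul] at this
    exact this.eventually (gt_mem_nhds hε)
  obtain ⟨n, hn1, hn⟩ := ((eventually_ge_atTop 1).and hsmall).exists
  obtain ⟨w, rfl, hxw⟩ := exists_length_eq_mem_image hA n x hxA
  refine ⟨w, List.ne_nil_of_length_pos hn1, hxw, ?_⟩
  rintro _ ⟨a, ha, rfl⟩
  obtain ⟨b, hb, rfl⟩ := hxw
  refine hball (Metric.mem_ball.2 ?_)
  calc dist (fWord f w a) (fWord f w b) ≤ c ^ w.length * dist a b := dist_le hc0 hf w a b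
    _ ≤ c ^ w.length * Metric.diam A := by
        gcongr; exact Metric.dist_le_diam_of_mem hAb ha hb
    _ < ε := hn

end fWord

theorem exists_common_ratio_lt_one {ι : Type*} [Finite ι] (r : ι → ℝ) (hr : ∀ j, r j < 1) :
    ∃ c : ℝ, 0 ≤ c ∧ c < 1 ∧ ∀ j, r j ≤ c := by
  have := Fintype.ofFinite ι
  refine ⟨(Finset.univ.sup fun j => (r j).toNNReal : NNReal), NNReal.coe_nonneg _, ?_,
    fun j => ?_⟩
  · exact_mod_cast (Finset.sup_lt_iff zero_lt_one).2 fun j _ => by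
      simpa using hr j
  · exact (Real.le_coe_toNNReal _).trans
      (NNReal.coe_le_coe.2 (Finset.le_sup (f := fun j => (r j).toNNReal) (Finset.mem_univ j)))

theorem dynInterior_union_of_pieces_general
    {d m : ℕ} (f : Fin m → Pt d → Pt d) (r : Fin m → ℝ)
    (hr1 : ∀ j, r j < 1)
    (hf : ∀ j x y, dist (f j x) (f j y) = r j * dist x y)
    (A : Set (Pt d)) (hAc : IsCompact A)
    (hA : A = ⋃ j, f j '' A) :
    (∀ x ∈ A \ dynBoundary f A, ∃ w : List (Fin m), w ≠ [] ∧
        x ∈ fWord f w '' A ∧ fWord f w '' A ⊆ A \ dynBoundary f A) ∧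
    A \ dynBoundary f A =
      ⋃ w ∈ {w : List (Fin m) | w ≠ [] ∧ fWord f w '' A ⊆ A \ dynBoundary f A},
        fWord f w '' A := by
  obtain ⟨c, hc0, hc1, hrc⟩ := exists_common_ratio_lt_one r hr1
  have hfc : ∀ j x y, dist (f j x) (f j y) ≤ c * dist x y := fun j x y =>
    (hf j x y).trans_le (by gcongr; exact hrc j)
  have hpiece : ∀ x ∈ A \ dynBoundary f A, ∃ w : List (Fin m), w ≠ [] ∧
      x ∈ fWord f w '' A ∧ fWord f w '' A ⊆ A \ dynBoundary f A := by
    rintro x ⟨hxA, hxB⟩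
    obtain ⟨w, hw, hxw, hwB⟩ := fWord.exists_mem_image_subset_of_isOpen hc0 hc1 hfc hA.subset
      hAc.isBounded isClosed_closure.isOpen_compl hxA hxB
    have hfA : ∀ j, f j '' A ⊆ A := fun j =>
      (subset_iUnion (fun j => f j '' A) j).trans hA.symm.subset
    exact ⟨w, hw, hxw, subset_inter (fWord.image_subset hfA w) hwB⟩
  refine ⟨hpiece, Subset.antisymm (fun x hx => ?_) (iUnion₂_subset fun w hw => hw.2)⟩
  obtain ⟨w, hw, hxw, hwI⟩ := hpiece x hx
  exact mem_biUnion (show w ∈ _ from ⟨hw, hwI⟩) hxw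

/-- Under the OSC, every point of the dynamical interior `I(A) = A \\ B(A)` lies in a
piece `A_w` contained in `I(A)`; consequently `I(A)` is the (countable) union of the
pieces it contains. -/
theorem dynInterior_union_of_pieces
    {d m : ℕ} (hm : 2 ≤ m) (f : Fin m → Pt d → Pt d) (r : Fin m → ℝ)
    (hr0 : ∀ j, 0 < r j) (hr1 : ∀ j, r j < 1)
    (hf : ∀ j x y, dist (f j x) (f j y) = r j * dist x y)
    (A : Set (Pt d)) (hAne : A.Nonempty) (hAc : IsCompact A)
    (hA : A = ⋃ j, f j '' A)
    (hOSC : ∃ U : Set (Pt d), U.Nonempty ∧ IsOpen U ∧ (∀ j, f j '' U ⊆ U) ∧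
      ∀ i j, i ≠ j → Disjoint (f i '' U) (f j '' U)) :
    (∀ x ∈ A \ dynBoundary f A, ∃ w : List (Fin m), w ≠ [] ∧
        x ∈ fWord f w '' A ∧ fWord f w '' A ⊆ A \ dynBoundary f A) ∧
    A \ dynBoundary f A =
      ⋃ w ∈ {w : List (Fin m) | w ≠ [] ∧ fWord f w '' A ⊆ A \ dynBoundary f A},
        fWord f w '' A :=
  dynInterior_union_of_pieces_general f r hr1 hf A hAc hA
end
end

section
/- Assume F satisfies the open set condition and A has nonempty topological interior. Then the topological interior int(A) itself witnesses the open set condition: the images f_1(int A),…,f_m(int A) are pairwise disjoint subsets of int A. -/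
open Set

noncomputable section

/-!
Each `f_j` is an open map with `f_j(A) ⊆ A`, so `f_j(int A) ⊆ int A`. For disjointness put
`t = ∑ r_j ^ n`, `n` the dimension: a similitude of ratio `ρ` scales Haar measure by `ρ ^ n`.
Iterating `S ↦ ⋃ f_j(S)` on a ball inside the OSC set `U` gives open sets of measure
`t ^ k · μ(ball)` (the pieces stay disjoint since they lie in `U`), all contained in a fixed
closed thickening of `A`, which the contractions `f_j` map into itself. Hence `t ≤ 1`, and then
`μ A + μ(f_i A ∩ f_j A) ≤ ∑ μ(f_k A) = t · μ A ≤ μ A` shows that `f_i A ∩ f_j A` is null; the open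
set `f_i(int A) ∩ f_j(int A)` inside it must be empty.
-/

open Function Filter MeasureTheory Metric Module
open scoped ENNReal Topology

section Similitude

variable {E : Type*} [NormedAddCommGroup E] [NormedSpace ℝ E] [FiniteDimensional ℝ E]

theorem LinearIsometryEquiv.abs_det_eq_one (L : E ≃ₗᵢ[ℝ] E) :
    |LinearMap.det (L : E →ₗ[ℝ] E)| = 1 := by
  borelize E
  let μ : Measure E := Measure.addHaar
  have hball : ENNReal.ofReal |LinearMap.det (L : E →ₗ[ℝ] E)| * μ (ball 0 1) = μ (ball 0 1) := by
    rw [← Measure.addHaar_image_linearMap]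
    change μ (L '' _) = _
    rw [L.image_ball, map_zero]
  rwa [ENNReal.mul_eq_right (measure_ball_pos μ 0 one_pos).ne' measure_ball_lt_top.ne,
    ENNReal.ofReal_eq_one] at hball

variable [StrictConvexSpace ℝ E] {g : E → E} {ρ : ℝ}

theorem exists_linearIsometryEquiv_of_dist_eq_mul (hρ : 0 < ρ)
    (hg : ∀ x y, dist (g x) (g y) = ρ * dist x y) :
    ∃ L : E ≃ₗᵢ[ℝ] E, ∀ x, g x = ρ • L x + g 0 := by
  have hiso : Isometry fun x => ρ⁻¹ • (g x - g 0) := by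
    refine Isometry.of_dist_eq fun x y => ?_
    rw [dist_smul₀, dist_sub_right, hg, Real.norm_eq_abs, abs_of_pos (inv_pos.2 hρ),
      inv_mul_cancel_left₀ hρ.ne']
  let G := hiso.affineIsometryOfStrictConvexSpace
  have hG : ∀ x, G.linearIsometry x = ρ⁻¹ • (g x - g 0) := fun x => by
    simpa [G] using (G.map_vadd 0 x).symm
  refine ⟨G.linearIsometry.toLinearIsometryEquiv rfl, fun x => ?_⟩
  rw [LinearIsometry.coe_toLinearIsometryEquiv, hG, smul_smul, mul_inv_cancel₀ hρ.ne', one_smul,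
    sub_add_cancel]

theorem isOpenMap_of_dist_eq_mul_s10 (hρ : 0 < ρ) (hg : ∀ x y, dist (g x) (g y) = ρ * dist x y) :
    IsOpenMap g := by
  obtain ⟨L, hL⟩ := exists_linearIsometryEquiv_of_dist_eq_mul hρ hg
  have : g = (· + g 0) ∘ (ρ • ·) ∘ L := funext hL
  rw [this]
  exact (Homeomorph.addRight (g 0)).isOpenMap.comp
    ((isOpenMap_smul₀ hρ.ne').comp L.toHomeomorph.isOpenMap)

theorem addHaar_image_of_dist_eq_mul [MeasurableSpace E] [BorelSpace E] (μ : Measure E)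
    [μ.IsAddHaarMeasure] (hρ : 0 < ρ) (hg : ∀ x y, dist (g x) (g y) = ρ * dist x y)
    (s : Set E) : μ (g '' s) = ENNReal.ofReal (ρ ^ finrank ℝ E) * μ s := by
  obtain ⟨L, hL⟩ := exists_linearIsometryEquiv_of_dist_eq_mul hρ hg
  have : g = (· + g 0) ∘ (ρ • (L : E →ₗ[ℝ] E)) := funext hL
  rw [this, image_comp, image_add_right, measure_preimage_add_right,
    Measure.addHaar_image_linearMap, LinearMap.det_smul, abs_mul, L.abs_det_eq_one, mul_one,
    abs_pow, abs_of_pos hρ]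

end Similitude

theorem lipschitzWith_of_dist_eq_mul {X Y : Type*} [PseudoMetricSpace X] [PseudoMetricSpace Y]
    {g : X → Y} {ρ : ℝ} (hρ : 0 ≤ ρ) (hg : ∀ x y, dist (g x) (g y) = ρ * dist x y) :
    LipschitzWith (Real.toNNReal ρ) g :=
  LipschitzWith.of_dist_le_mul fun x y => by rw [hg, Real.coe_toNNReal _ hρ]

theorem LipschitzWith.mapsTo_cthickening {X : Type*} [PseudoEMetricSpace X] {g : X → X}
    (hg : LipschitzWith 1 g) {A : Set X} (hA : MapsTo g A A) (δ : ℝ) :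
    MapsTo g (cthickening δ A) (cthickening δ A) := fun x hx =>
  calc Metric.infEDist (g x) A ≤ Metric.infEDist x A := Metric.le_infEDist.2 fun y hy =>
        (Metric.infEDist_le_edist_of_mem (hA hy)).trans (by simpa using hg x y)
    _ ≤ ENNReal.ofReal δ := hx

theorem ENNReal.le_one_of_forall_pow_mul_le {t a b : ℝ≥0∞} (ha : a ≠ 0) (hb : b ≠ ∞)
    (h : ∀ k : ℕ, t ^ k * a ≤ b) : t ≤ 1 := by
  by_contra! ht
  have hlim : Tendsto (fun k : ℕ => t ^ k * a) atTop (𝓝 ∞) := by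
    simpa [ENNReal.top_mul ha] using ENNReal.Tendsto.mul_const (b := a)
      (ENNReal.tendsto_pow_atTop_nhds_top_iff.2 ht) (Or.inl ENNReal.top_ne_zero)
  obtain ⟨k, hk⟩ := (hlim.eventually (lt_mem_nhds hb.lt_top)).exists
  exact (h k).not_gt hk

theorem MeasureTheory.measure_iUnion_add_measure_inter_le_sum {α ι : Type*} [MeasurableSpace α]
    [Fintype ι] [DecidableEq ι] (μ : Measure α) (s : ι → Set α) {i j : ι} (hij : i ≠ j)
    (hj : MeasurableSet (s j)) : μ (⋃ k, s k) + μ (s i ∩ s j) ≤ ∑ k, μ (s k) := by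
  -- Replacing `s i` by `s i \ s j` keeps the union and lowers the sum by `μ (s i ∩ s j)`.
  let s' := update s i (s i \ s j)
  have hcover : ⋃ k, s k ⊆ ⋃ k, s' k := by
    refine iUnion_subset fun k x hx => ?_
    by_cases hk : k = i
    · subst hk
      by_cases hxj : x ∈ s j
      · exact mem_iUnion.2 ⟨j, by simpa [s', update_of_ne hij.symm] using hxj⟩
      · exact mem_iUnion.2 ⟨k, by simpa [s'] using ⟨hx, hxj⟩⟩
    · exact mem_iUnion.2 ⟨k, by simpa [s', update_of_ne hk] using hx⟩
  calc μ (⋃ k, s k) + μ (s i ∩ s j)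
      ≤ ∑ k, μ (s' k) + μ (s i ∩ s j) := by
        gcongr; exact (measure_mono hcover).trans (measure_iUnion_fintype_le μ s')
    _ = ∑ k, μ (s k) := by
        have hsum : ∑ k, μ (s' k) = μ (s i \ s j) + ∑ k ∈ Finset.univ \ {i}, μ (s k) := by
          simp only [s', apply_update (fun _ => μ)]
          exact Finset.sum_update_of_mem (Finset.mem_univ i) _ _
        rw [hsum, add_right_comm, measure_sdiff_add_inter _ hj, Finset.sdiff_singleton_eq_erase]
        exact Finset.add_sum_erase _ (fun k => μ (s k)) (Finset.mem_univ i)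

def hutchinson {ι X : Type*} (f : ι → X → X) (s : Set X) : Set X :=
  ⋃ i, f i '' s

structure OpenSetCondition {ι X : Type*} [TopologicalSpace X] (f : ι → X → X) (U : Set X) :
    Prop where
  nonempty : U.Nonempty
  isOpen : IsOpen U
  image_subset : ∀ i, f i '' U ⊆ U
  pairwise_disjoint : Pairwise (Disjoint on fun i => f i '' U)

section SelfSimilar

variable {E : Type*} [NormedAddCommGroup E] [NormedSpace ℝ E] [StrictConvexSpace ℝ E]
  [FiniteDimensional ℝ E] [MeasurableSpace E] [BorelSpace E] (μ : Measure E) [μ.IsAddHaarMeasure]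
  {ι : Type*} [Fintype ι] {f : ι → E → E} {r : ι → ℝ}

theorem addHaar_hutchinson_of_subset (hr0 : ∀ i, 0 < r i)
    (hf : ∀ i x y, dist (f i x) (f i y) = r i * dist x y) {U : Set E}
    (hU : Pairwise (Disjoint on fun i => f i '' U)) {s : Set E} (hs : IsOpen s) (hsU : s ⊆ U) :
    μ (hutchinson f s) = (∑ i, ENNReal.ofReal (r i ^ finrank ℝ E)) * μ s := by
  have hdisj : Pairwise (Disjoint on fun i => f i '' s) := fun i j hij =>
    (hU hij).mono (image_mono hsU) (image_mono hsU)
  rw [hutchinson, measure_iUnion hdisj fun i =>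
      (isOpenMap_of_dist_eq_mul_s10 (hr0 i) (hf i) s hs).measurableSet,
    tsum_fintype, Finset.sum_mul]
  exact Finset.sum_congr rfl fun i _ => addHaar_image_of_dist_eq_mul μ (hr0 i) (hf i) s

theorem OpenSetCondition.sum_ofReal_pow_finrank_le_one {U : Set E} (hU : OpenSetCondition f U)
    (hr0 : ∀ i, 0 < r i) (hr1 : ∀ i, r i ≤ 1) (hf : ∀ i x y, dist (f i x) (f i y) = r i * dist x y)
    {A : Set E} (hAne : A.Nonempty) (hAb : Bornology.IsBounded A) (hAf : ∀ i, f i '' A ⊆ A) :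
    ∑ i, ENNReal.ofReal (r i ^ finrank ℝ E) ≤ 1 := by
  let μ : Measure E := Measure.addHaar
  obtain ⟨x₀, hx₀⟩ := hU.nonempty
  obtain ⟨ε, hε, hball⟩ := isOpen_iff.1 hU.isOpen x₀ hx₀
  obtain ⟨a, ha⟩ := hAne
  set K := cthickening (dist x₀ a + ε) A
  have hballK : ball x₀ ε ⊆ K := fun x hx =>
    mem_cthickening_of_dist_le x a _ A ha (by linarith [dist_triangle x x₀ a, mem_ball.1 hx])
  have hfK : ∀ i, f i '' K ⊆ K := fun i =>
    (((lipschitzWith_of_dist_eq_mul (hr0 i).le (hf i)).weaken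
      (Real.toNNReal_le_one.2 (hr1 i))).mapsTo_cthickening (mapsTo_iff_image_subset.2 (hAf i))
      _).image_subset
  set D := fun k => (hutchinson f)^[k] (ball x₀ ε)
  have hD : ∀ k, IsOpen (D k) ∧ D k ⊆ U ∧ D k ⊆ K := fun k =>
    Iterate.rec (fun s => IsOpen s ∧ s ⊆ U ∧ s ⊆ K) ⟨isOpen_ball, hball, hballK⟩
      (fun s ⟨hso, hsU, hsK⟩ =>
        ⟨isOpen_iUnion fun i => isOpenMap_of_dist_eq_mul_s10 (hr0 i) (hf i) s hso,
          iUnion_subset fun i => (image_mono hsU).trans (hU.image_subset i),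
          iUnion_subset fun i => (image_mono hsK).trans (hfK i)⟩) k
  have hvol : ∀ k, μ (D k) = (∑ i, ENNReal.ofReal (r i ^ finrank ℝ E)) ^ k * μ (ball x₀ ε) := by
    intro k
    induction k with
    | zero => simp [D]
    | succ k ih =>
      rw [show D (k + 1) = hutchinson f (D k) from iterate_succ_apply' _ _ _,
        addHaar_hutchinson_of_subset μ hr0 hf hU.pairwise_disjoint (hD k).1 (hD k).2.1, ih,
        pow_succ', mul_assoc]
  have hKfin : μ K ≠ ∞ := hAb.cthickening.measure_lt_top.ne
  exact ENNReal.le_one_of_forall_pow_mul_le (measure_ball_pos μ x₀ hε).ne' hKfin fun k =>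
    hvol k ▸ measure_mono (hD k).2.2

theorem OpenSetCondition.addHaar_image_inter_image_eq_zero {U : Set E}
    (hU : OpenSetCondition f U) (hr0 : ∀ i, 0 < r i) (hr1 : ∀ i, r i ≤ 1)
    (hf : ∀ i x y, dist (f i x) (f i y) = r i * dist x y) {A : Set E} (hAne : A.Nonempty)
    (hAc : IsCompact A) (hA : A = ⋃ i, f i '' A) {i j : ι} (hij : i ≠ j) :
    μ (f i '' A ∩ f j '' A) = 0 := by
  classical
  have hAf : ∀ i, f i '' A ⊆ A := fun i => (subset_iUnion (fun k => f k '' A) i).trans hA.ge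
  have hsum := hU.sum_ofReal_pow_finrank_le_one hr0 hr1 hf hAne hAc.isBounded hAf
  have hfj : MeasurableSet (f j '' A) :=
    (hAc.image (lipschitzWith_of_dist_eq_mul (hr0 j).le (hf j)).continuous).measurableSet
  have hle : μ A + μ (f i '' A ∩ f j '' A) ≤ μ A + 0 := calc
    μ A + μ (f i '' A ∩ f j '' A) ≤ ∑ k, μ (f k '' A) := by
      nth_rewrite 1 [hA]
      exact measure_iUnion_add_measure_inter_le_sum μ (fun k => f k '' A) hij hfj
    _ = (∑ k, ENNReal.ofReal (r k ^ finrank ℝ E)) * μ A := by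
      rw [Finset.sum_mul]
      exact Finset.sum_congr rfl fun k _ => addHaar_image_of_dist_eq_mul μ (hr0 k) (hf k) A
    _ ≤ μ A + 0 := by rw [add_zero]; exact mul_le_of_le_one_left' hsum
  exact nonpos_iff_eq_zero.1 ((ENNReal.add_le_add_iff_left hAc.measure_lt_top.ne).1 hle)

end SelfSimilar

theorem interior_witnesses_osc_general
    {d m : ℕ} (f : Fin m → Pt d → Pt d) (r : Fin m → ℝ)
    (hr0 : ∀ j, 0 < r j) (hr1 : ∀ j, r j < 1)
    (hf : ∀ j x y, dist (f j x) (f j y) = r j * dist x y)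
    (A : Set (Pt d)) (hAne : A.Nonempty) (hAc : IsCompact A)
    (hA : A = ⋃ j, f j '' A)
    (hOSC : ∃ U : Set (Pt d), U.Nonempty ∧ IsOpen U ∧ (∀ j, f j '' U ⊆ U) ∧
      ∀ i j, i ≠ j → Disjoint (f i '' U) (f j '' U)) :
    (∀ j, f j '' interior A ⊆ interior A) ∧
    ∀ i j, i ≠ j → Disjoint (f i '' interior A) (f j '' interior A) := by
  obtain ⟨U, hUne, hUo, hUf, hUd⟩ := hOSC
  have hU : OpenSetCondition f U := ⟨hUne, hUo, hUf, fun i j => hUd i j⟩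
  have hopen : ∀ j, IsOpenMap (f j) := fun j => isOpenMap_of_dist_eq_mul_s10 (hr0 j) (hf j)
  refine ⟨fun j => ((hopen j).image_interior_subset A).trans
    (interior_mono ((subset_iUnion (fun k => f k '' A) j).trans hA.ge)), fun i j hij => ?_⟩
  have hnull := hU.addHaar_image_inter_image_eq_zero volume hr0 (fun j => (hr1 j).le) hf hAne hAc
    hA hij
  rw [disjoint_iff_inter_eq_empty, ← (((hopen i) _ isOpen_interior).inter
    ((hopen j) _ isOpen_interior)).measure_eq_zero_iff volume]
  exact measure_mono_null (inter_subset_inter (image_mono interior_subset)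
    (image_mono interior_subset)) hnull

/-- Under the OSC, if `A` has nonempty topological interior, then `int A` itself
witnesses the open set condition: the sets `f_j(int A)` are pairwise disjoint
subsets of `int A`. -/
theorem interior_witnesses_osc
    {d m : ℕ} (hm : 2 ≤ m) (f : Fin m → Pt d → Pt d) (r : Fin m → ℝ)
    (hr0 : ∀ j, 0 < r j) (hr1 : ∀ j, r j < 1)
    (hf : ∀ j x y, dist (f j x) (f j y) = r j * dist x y)
    (A : Set (Pt d)) (hAne : A.Nonempty) (hAc : IsCompact A)
    (hA : A = ⋃ j, f j '' A)
    (hOSC : ∃ U : Set (Pt d), U.Nonempty ∧ IsOpen U ∧ (∀ j, f j '' U ⊆ U) ∧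
      ∀ i j, i ≠ j → Disjoint (f i '' U) (f j '' U))
    (hint : (interior A).Nonempty) :
    (∀ j, f j '' interior A ⊆ interior A) ∧
    ∀ i j, i ≠ j → Disjoint (f i '' interior A) (f j '' interior A) :=
  interior_witnesses_osc_general f r hr0 hr1 hf A hAne hAc hA hOSC
end
end

section
/- Let k : ℂ → ℂ be the map k(z) = −z − 1 and set K = A ∩ k(A). Then K satisfies the graph-directed equation K = f_{112}(K) ∪ f_{123}(K) ∪ f_{312}(K) ∪ f_{323}(K), where f_{w_1 w_2 w_3} = f_{w_1} ∘ f_{w_2} ∘ f_{w_3}. -/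
open Set Complex

noncomputable section

/-!
The bound `N (f z) ≤ N z / 2 + 1 / 4` for `N z = max |re z| |im z|` and `f = fsq_i`, applied at a
maximiser of `N` on the compact set `A`, puts `A` in the square `[-1/2, 1/2]²`; hence
`K = A ∩ k(A)` lies on the left edge `re z = -1/2`. Following edges through the IFS (left edge
from the bottom edges of the `f₁`- and `f₃`-cells, bottom edge from the right edge of the
`f₁`-cell and the top edge of the `f₂`-cell), every left-edge point of `A` lies in one of the
cells `f_w(A)`, `w ∈ {112, 123, 312, 323}`, and `f_w z = z / 8 + β_w`. The reflection `k`
permutes these cells, `k (z / 8 + β) = k z / 8 + (-β - 7/8)`, and two different cells meet on the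
left edge only in `-1/2 = f₃₂₃ (-(1+i)/2)`, where `-(1+i)/2 ∈ K` is the fixed point of `f₁₂₃`.
So `z = f_w u ∈ K` forces `u ∈ K`, and conversely `f_w` maps `K` into `K`.
-/

/-- The fractal-square IFS maps `f₁(z) = -iz/2 - (1+i)/4`, `f₂(z) = -z/2 + (1-i)/4`,
`f₃(z) = -iz/2 - (1-i)/4`. -/
def fsq₁ : ℂ → ℂ := fun z => -Complex.I * z / 2 - (1 + Complex.I) / 4

def fsq₂ : ℂ → ℂ := fun z => -z / 2 + (1 - Complex.I) / 4

def fsq₃ : ℂ → ℂ := fun z => -Complex.I * z / 2 - (1 - Complex.I) / 4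

theorem ContractingWith.mem_of_isFixedPt {α : Type*} [MetricSpace α] [CompleteSpace α]
    {K : NNReal} {f : α → α} (hf : ContractingWith K f) {A : Set α} (hAc : IsClosed A)
    (hAne : A.Nonempty) (hfA : MapsTo f A A) {x : α} (hx : Function.IsFixedPt f x) : x ∈ A := by
  obtain ⟨a, ha⟩ := hAne
  have : Nonempty α := ⟨a⟩
  rw [hf.fixedPoint_unique hx]
  exact hAc.mem_of_tendsto (hf.tendsto_iterate_fixedPoint a)
    (Filter.Eventually.of_forall fun n => hfA.iterate n ha)

theorem IsCompact.le_div_of_forall_exists_le {X : Type*} [TopologicalSpace X] {A : Set X}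
    (hAc : IsCompact A) (hAne : A.Nonempty) {N : X → ℝ} (hN : ContinuousOn N A) {c d : ℝ}
    (hc₀ : 0 ≤ c) (hc₁ : c < 1) (h : ∀ x ∈ A, ∃ u ∈ A, N x ≤ c * N u + d) :
    ∀ x ∈ A, N x ≤ d / (1 - c) := by
  obtain ⟨m, hmA, hm⟩ := hAc.exists_isMaxOn hAne hN
  have hNm : N m ≤ d / (1 - c) := by
    obtain ⟨u, huA, hu⟩ := h m hmA
    rw [le_div_iff₀ (by linarith)]
    nlinarith [mul_le_mul_of_nonneg_left (hm huA) hc₀]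
  exact fun x hx => (hm hx).trans hNm

lemma fsq₁_re (z : ℂ) : (fsq₁ z).re = z.im / 2 - 1 / 4 := by simp [fsq₁]
lemma fsq₁_im (z : ℂ) : (fsq₁ z).im = -z.re / 2 - 1 / 4 := by simp [fsq₁]
lemma fsq₂_re (z : ℂ) : (fsq₂ z).re = -z.re / 2 + 1 / 4 := by simp [fsq₂]
lemma fsq₂_im (z : ℂ) : (fsq₂ z).im = -z.im / 2 - 1 / 4 := by simp [fsq₂]; ring
lemma fsq₃_re (z : ℂ) : (fsq₃ z).re = z.im / 2 - 1 / 4 := by simp [fsq₃]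
lemma fsq₃_im (z : ℂ) : (fsq₃ z).im = -z.re / 2 + 1 / 4 := by simp [fsq₃]; ring

lemma fsq₁₁₂_apply (z : ℂ) : (fsq₁ ∘ fsq₁ ∘ fsq₂) z = z / 8 + (-7 - I) / 16 := by
  apply Complex.ext <;> simp [fsq₁, fsq₂] <;> ring
lemma fsq₁₂₃_apply (z : ℂ) : (fsq₁ ∘ fsq₂ ∘ fsq₃) z = z / 8 + (-7 - 7 * I) / 16 := by
  apply Complex.ext <;> simp [fsq₁, fsq₂, fsq₃] <;> ring
lemma fsq₃₁₂_apply (z : ℂ) : (fsq₃ ∘ fsq₁ ∘ fsq₂) z = z / 8 + (-7 + 7 * I) / 16 := by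
  apply Complex.ext <;> simp [fsq₁, fsq₂, fsq₃] <;> ring
lemma fsq₃₂₃_apply (z : ℂ) : (fsq₃ ∘ fsq₂ ∘ fsq₃) z = z / 8 + (-7 + I) / 16 := by
  apply Complex.ext <;> simp [fsq₂, fsq₃] <;> ring

def leftCells (S : Set ℂ) : Set ℂ :=
  (fsq₁ ∘ fsq₁ ∘ fsq₂) '' S ∪ (fsq₁ ∘ fsq₂ ∘ fsq₃) '' S ∪
    (fsq₃ ∘ fsq₁ ∘ fsq₂) '' S ∪ (fsq₃ ∘ fsq₂ ∘ fsq₃) '' S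

def leftOffsets : Set ℂ := {(-7 - I) / 16, (-7 - 7 * I) / 16, (-7 + 7 * I) / 16, (-7 + I) / 16}

lemma mem_leftCells_iff {S : Set ℂ} {z : ℂ} :
    z ∈ leftCells S ↔ ∃ β ∈ leftOffsets, ∃ u ∈ S, u / 8 + β = z := by
  simp only [leftCells, leftOffsets, mem_union, mem_image, fsq₁₁₂_apply, fsq₁₂₃_apply,
    fsq₃₁₂_apply, fsq₃₂₃_apply, mem_insert_iff, mem_singleton_iff, exists_eq_or_imp,
    exists_eq_left, or_assoc]

lemma neg_sub_mem_leftOffsets {β : ℂ} (hβ : β ∈ leftOffsets) : -β - 7 / 8 ∈ leftOffsets := by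
  simp only [leftOffsets, mem_insert_iff, mem_singleton_iff] at hβ ⊢
  rcases hβ with rfl | rfl | rfl | rfl
  · right; right; right; ring
  · right; right; left; ring
  · right; left; ring
  · left; ring

lemma leftOffset_eq_of_add_eq {β β' u w : ℂ} (hβ : β ∈ leftOffsets) (hβ' : β' ∈ leftOffsets)
    (hu : |u.im| ≤ 1 / 2) (hw : |w.im| ≤ 1 / 2) (h : u / 8 + β = w / 8 + β')
    (him : (u / 8 + β).im ≠ 0) : β = β' := by
  have him_eq := congrArg im h
  simp only [leftOffsets, mem_insert_iff, mem_singleton_iff] at hβ hβ'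
  rw [abs_le] at hu hw
  rcases hβ with rfl | rfl | rfl | rfl <;> rcases hβ' with rfl | rfl | rfl | rfl <;>
    first
    | rfl
    | (exfalso; apply him; norm_num at him_eq ⊢; linarith)

section Attractor

variable {A : Set ℂ}

lemma mapsTo_fsq₁ (hA : A = fsq₁ '' A ∪ fsq₂ '' A ∪ fsq₃ '' A) : MapsTo fsq₁ A A :=
  fun _ hu => hA ▸ Or.inl (Or.inl (mem_image_of_mem _ hu))

lemma mapsTo_fsq₂ (hA : A = fsq₁ '' A ∪ fsq₂ '' A ∪ fsq₃ '' A) : MapsTo fsq₂ A A :=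
  fun _ hu => hA ▸ Or.inl (Or.inr (mem_image_of_mem _ hu))

lemma mapsTo_fsq₃ (hA : A = fsq₁ '' A ∪ fsq₂ '' A ∪ fsq₃ '' A) : MapsTo fsq₃ A A :=
  fun _ hu => hA ▸ Or.inr (mem_image_of_mem _ hu)

lemma leftCells_subset (hA : A = fsq₁ '' A ∪ fsq₂ '' A ∪ fsq₃ '' A) : leftCells A ⊆ A := by
  have h₁ := mapsTo_fsq₁ hA
  have h₂ := mapsTo_fsq₂ hA
  have h₃ := mapsTo_fsq₃ hA
  exact union_subset (union_subset (union_subset (h₁.comp (h₁.comp h₂)).image_subset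
    (h₁.comp (h₂.comp h₃)).image_subset) (h₃.comp (h₁.comp h₂)).image_subset)
    (h₃.comp (h₂.comp h₃)).image_subset

lemma forall_mem_abs_le_half (hAne : A.Nonempty) (hAc : IsCompact A)
    (hA : A = fsq₁ '' A ∪ fsq₂ '' A ∪ fsq₃ '' A) :
    ∀ z ∈ A, |z.re| ≤ 1 / 2 ∧ |z.im| ≤ 1 / 2 := by
  have hN : ContinuousOn (fun z : ℂ => max |z.re| |z.im|) A := by fun_prop
  have hstep : ∀ x ∈ A, ∃ u ∈ A, max |x.re| |x.im| ≤ 1 / 2 * max |u.re| |u.im| + 1 / 4 := by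
    intro x hx
    rw [hA] at hx
    rcases hx with (⟨u, hu, rfl⟩ | ⟨u, hu, rfl⟩) | ⟨u, hu, rfl⟩ <;> refine ⟨u, hu, ?_⟩ <;>
      have hre := abs_le.1 (le_max_left |u.re| |u.im|) <;>
      have him := abs_le.1 (le_max_right |u.re| |u.im|) <;>
      simp only [fsq₁_re, fsq₁_im, fsq₂_re, fsq₂_im, fsq₃_re, fsq₃_im, max_le_iff, abs_le] <;>
      refine ⟨⟨?_, ?_⟩, ?_, ?_⟩ <;> linarith
  intro z hz
  have hbound := hAc.le_div_of_forall_exists_le hAne hN (by norm_num) (by norm_num) hstep z hz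
  norm_num at hbound
  exact hbound

lemma mem_image_fsq₂_of_re_eq_half (hA : A = fsq₁ '' A ∪ fsq₂ '' A ∪ fsq₃ '' A)
    (hbox : ∀ z ∈ A, |z.re| ≤ 1 / 2 ∧ |z.im| ≤ 1 / 2) {z : ℂ} (hz : z ∈ A) (hre : z.re = 1 / 2) :
    z ∈ fsq₂ '' A := by
  rw [hA] at hz
  rcases hz with (⟨u, hu, rfl⟩ | h) | ⟨u, hu, rfl⟩
  · rw [fsq₁_re] at hre; linarith [(abs_le.1 (hbox u hu).2).2]
  · exact h
  · rw [fsq₃_re] at hre; linarith [(abs_le.1 (hbox u hu).2).2]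

lemma mem_image_fsq₃_of_im_eq_half (hA : A = fsq₁ '' A ∪ fsq₂ '' A ∪ fsq₃ '' A)
    (hbox : ∀ z ∈ A, |z.re| ≤ 1 / 2 ∧ |z.im| ≤ 1 / 2) {z : ℂ} (hz : z ∈ A) (him : z.im = 1 / 2) :
    z ∈ fsq₃ '' A := by
  rw [hA] at hz
  rcases hz with (⟨u, hu, rfl⟩ | ⟨u, hu, rfl⟩) | h
  · rw [fsq₁_im] at him; linarith [(abs_le.1 (hbox u hu).1).1]
  · rw [fsq₂_im] at him; linarith [(abs_le.1 (hbox u hu).2).1]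
  · exact h

lemma mem_image_of_im_eq_neg_half (hA : A = fsq₁ '' A ∪ fsq₂ '' A ∪ fsq₃ '' A)
    (hbox : ∀ z ∈ A, |z.re| ≤ 1 / 2 ∧ |z.im| ≤ 1 / 2) {z : ℂ} (hz : z ∈ A)
    (him : z.im = -(1 / 2)) : z ∈ (fsq₁ ∘ fsq₂) '' A ∪ (fsq₂ ∘ fsq₃) '' A := by
  rw [hA] at hz
  rcases hz with (⟨u, hu, rfl⟩ | ⟨u, hu, rfl⟩) | ⟨u, hu, rfl⟩
  · rw [fsq₁_im] at him
    obtain ⟨w, hw, rfl⟩ := mem_image_fsq₂_of_re_eq_half hA hbox hu (by linarith)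
    exact Or.inl ⟨w, hw, rfl⟩
  · rw [fsq₂_im] at him
    obtain ⟨w, hw, rfl⟩ := mem_image_fsq₃_of_im_eq_half hA hbox hu (by linarith)
    exact Or.inr ⟨w, hw, rfl⟩
  · rw [fsq₃_im] at him; linarith [(abs_le.1 (hbox u hu).1).2]

lemma mem_leftCells_of_re_eq_neg_half (hA : A = fsq₁ '' A ∪ fsq₂ '' A ∪ fsq₃ '' A)
    (hbox : ∀ z ∈ A, |z.re| ≤ 1 / 2 ∧ |z.im| ≤ 1 / 2) {z : ℂ} (hz : z ∈ A)
    (hre : z.re = -(1 / 2)) : z ∈ leftCells A := by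
  rw [hA] at hz
  rcases hz with (⟨u, hu, rfl⟩ | ⟨u, hu, rfl⟩) | ⟨u, hu, rfl⟩
  · rw [fsq₁_re] at hre
    rcases mem_image_of_im_eq_neg_half hA hbox hu (by linarith) with ⟨w, hw, rfl⟩ | ⟨w, hw, rfl⟩
    · exact Or.inl (Or.inl (Or.inl ⟨w, hw, rfl⟩))
    · exact Or.inl (Or.inl (Or.inr ⟨w, hw, rfl⟩))
  · rw [fsq₂_re] at hre; linarith [(abs_le.1 (hbox u hu).1).2]
  · rw [fsq₃_re] at hre
    rcases mem_image_of_im_eq_neg_half hA hbox hu (by linarith) with ⟨w, hw, rfl⟩ | ⟨w, hw, rfl⟩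
    · exact Or.inl (Or.inr ⟨w, hw, rfl⟩)
    · exact Or.inr ⟨w, hw, rfl⟩

lemma corner_mem (hAne : A.Nonempty) (hAc : IsCompact A)
    (hA : A = fsq₁ '' A ∪ fsq₂ '' A ∪ fsq₃ '' A) : -(1 + I) / 2 ∈ A := by
  have hf : ContractingWith (1 / 8) (fsq₁ ∘ fsq₂ ∘ fsq₃) := by
    refine ⟨by norm_num, LipschitzWith.of_dist_le_mul fun x y => ?_⟩
    rw [fsq₁₂₃_apply, fsq₁₂₃_apply, dist_add_right, dist_eq_norm, dist_eq_norm, ← sub_div,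
      norm_div]
    norm_num [div_eq_inv_mul]
  have hfix : Function.IsFixedPt (fsq₁ ∘ fsq₂ ∘ fsq₃) (-(1 + I) / 2) := by
    rw [Function.IsFixedPt, fsq₁₂₃_apply]; ring
  exact hf.mem_of_isFixedPt hAc.isClosed hAne
    ((mapsTo_fsq₁ hA).comp ((mapsTo_fsq₂ hA).comp (mapsTo_fsq₃ hA))) hfix

lemma leftCells_inter_reflect_subset (hA : A = fsq₁ '' A ∪ fsq₂ '' A ∪ fsq₃ '' A) :
    leftCells (A ∩ (fun z => -z - 1) '' A) ⊆ A ∩ (fun z => -z - 1) '' A := by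
  intro z hz
  obtain ⟨β, hβ, u, ⟨huA, w, hwA, rfl⟩, rfl⟩ := mem_leftCells_iff.1 hz
  refine ⟨leftCells_subset hA (mem_leftCells_iff.2 ⟨β, hβ, _, huA, rfl⟩), w / 8 + (-β - 7 / 8),
    leftCells_subset hA (mem_leftCells_iff.2 ⟨_, neg_sub_mem_leftOffsets hβ, w, hwA, rfl⟩), ?_⟩
  ring

lemma inter_reflect_subset_leftCells (hA : A = fsq₁ '' A ∪ fsq₂ '' A ∪ fsq₃ '' A)
    (hbox : ∀ z ∈ A, |z.re| ≤ 1 / 2 ∧ |z.im| ≤ 1 / 2) (hcorner : -(1 + I) / 2 ∈ A) :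
    A ∩ (fun z => -z - 1) '' A ⊆ leftCells (A ∩ (fun z => -z - 1) '' A) := by
  rintro _ ⟨hzA, b, hbA, rfl⟩
  beta_reduce at hzA ⊢
  have hre : b.re = -(1 / 2) := by
    have := abs_le.1 (hbox _ hzA).1
    simp only [sub_re, neg_re, one_re] at this
    linarith [(abs_le.1 (hbox b hbA).1).1]
  by_cases him : b.im = 0
  · have hb : b = -(1 / 2) := Complex.ext (by simpa using hre) (by simpa using him)
    refine mem_leftCells_iff.2 ⟨(-7 + I) / 16, by simp [leftOffsets], -(1 + I) / 2,
      ⟨hcorner, fsq₃ (-(1 + I) / 2), mapsTo_fsq₃ hA hcorner, ?_⟩, ?_⟩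
    · simp only [fsq₃]; linear_combination (-(1 : ℂ) / 4) * I_sq
    · rw [hb]; ring
  obtain ⟨β, hβ, u, huA, rfl⟩ := mem_leftCells_iff.1 (mem_leftCells_of_re_eq_neg_half hA hbox hbA hre)
  obtain ⟨β', hβ', w, hwA, hw⟩ := mem_leftCells_iff.1 <|
    mem_leftCells_of_re_eq_neg_half hA hbox hzA (by simp only [sub_re, neg_re, one_re]; linarith)
  have hk : -(u / 8 + β) - 1 = (-u - 1) / 8 + (-β - 7 / 8) := by ring
  have hβeq : -β - 7 / 8 = β' := by
    refine leftOffset_eq_of_add_eq (u := -u - 1) (neg_sub_mem_leftOffsets hβ) hβ' ?_ (hbox w hwA).2 ?_ ?_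
    · simpa using (hbox u huA).2
    · rw [← hk, hw]
    · rw [← hk, sub_im, neg_im, one_im, sub_zero, neg_ne_zero]; exact him
  have hwu : w = -u - 1 := by rw [← hβeq] at hw; linear_combination 8 * hw
  exact mem_leftCells_iff.2 ⟨β', hβ', w, ⟨hwA, u, huA, hwu.symm⟩, hw⟩

end Attractor

/-- The boundary set `K = A ∩ k(A)`, `k(z) = -z - 1`, satisfies the graph-directed
equation `K = f₁₁₂(K) ∪ f₁₂₃(K) ∪ f₃₁₂(K) ∪ f₃₂₃(K)`. -/
theorem fsq_boundary_K_graph_directed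
    (A : Set ℂ) (hAne : A.Nonempty) (hAc : IsCompact A)
    (hA : A = fsq₁ '' A ∪ fsq₂ '' A ∪ fsq₃ '' A)
    (k : ℂ → ℂ) (hk : ∀ z, k z = -z - 1)
    (K : Set ℂ) (hK : K = A ∩ k '' A) :
    K = (fsq₁ ∘ fsq₁ ∘ fsq₂) '' K ∪ (fsq₁ ∘ fsq₂ ∘ fsq₃) '' K ∪
        (fsq₃ ∘ fsq₁ ∘ fsq₂) '' K ∪ (fsq₃ ∘ fsq₂ ∘ fsq₃) '' K := by
  obtain rfl : k = fun z => -z - 1 := funext hk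
  subst hK
  exact Subset.antisymm
    (inter_reflect_subset_leftCells hA (forall_mem_abs_le_half hAne hAc hA)
      (corner_mem hAne hAc hA))
    (leftCells_inter_reflect_subset hA)
end
end
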